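/- arXiv:2312.05593 — 5 statements merged into one kernel-verified Lean document; each statement's English description precedes it below -/
import Mathlib

section
/- For any real n × p matrix X, the ridge estimator converges to the pseudo-OLS estimator as the penalty vanishes: lim_{λ → 0⁺} (XᵀX + λ I_p)⁻¹ Xᵀ Y = (XᵀX)⁺ Xᵀ Y for every Y ∈ ℝⁿ. -/
/-!
Put `A = XᵀX`. Since `range (XᵀX) = range Xᵀ`, we have `XᵀY = A c` for some `c`; let `q = Gᵀ c`.
The Penrose equations `AGA = A` and `(GA)ᵀ = GA` give `G (XᵀY) = A q` and `A (A q) = XᵀY`, whence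
`(A + λ)⁻¹ XᵀY = A q - λ q + λ² (A + λ)⁻¹ q`. As `A` is positive semidefinite,
`λ ‖(A + λ)⁻¹ q‖ ≤ ‖q‖`, so the last two terms are `O(λ)`.
-/

open Matrix

/-- The Moore–Penrose pseudoinverse: `B` satisfies the four Penrose equations for `A`. -/
def IsMoorePenrose {m n : ℕ} (A : Matrix (Fin m) (Fin n) ℝ) (B : Matrix (Fin n) (Fin m) ℝ) : Prop :=
  A * B * A = A ∧ B * A * B = B ∧ (A * B)ᵀ = A * B ∧ (B * A)ᵀ = B * A

open Filter Topology

namespace Matrix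

variable {m n : Type*} [Fintype m] [Fintype n]

theorem range_mulVecLin_transpose_mul_self {R : Type*} [Field R] [LinearOrder R]
    [IsStrictOrderedRing R] (A : Matrix m n R) :
    LinearMap.range (Aᵀ * A).mulVecLin = LinearMap.range Aᵀ.mulVecLin := by
  refine Submodule.eq_of_le_of_finrank_eq ?_ ?_
  · rintro _ ⟨v, rfl⟩
    exact ⟨A *ᵥ v, by simp⟩
  · exact (rank_transpose_mul_self A).trans (rank_transpose A).symm

theorem norm_le_sqrt_dotProduct_self (v : n → ℝ) : ‖v‖ ≤ √(v ⬝ᵥ v) := by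
  refine (pi_norm_le_iff_of_nonneg (Real.sqrt_nonneg _)).2 fun i => ?_
  rw [Real.norm_eq_abs, ← Real.sqrt_sq_eq_abs]
  refine Real.sqrt_le_sqrt ?_
  rw [sq, dotProduct]
  exact Finset.single_le_sum (fun j _ => mul_self_nonneg (v j)) (Finset.mem_univ i)

variable [DecidableEq n]

-- The right side is `Au ⬝ᵥ Au + 2λ (u ⬝ᵥ Au) + λ² (u ⬝ᵥ u)`, whose first two terms are nonnegative.
theorem PosSemidef.sq_mul_dotProduct_self_le {A : Matrix n n ℝ} (hA : A.PosSemidef) {lam : ℝ}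
    (hlam : 0 ≤ lam) (u : n → ℝ) :
    lam ^ 2 * (u ⬝ᵥ u) ≤ ((A + lam • 1) *ᵥ u) ⬝ᵥ ((A + lam • 1) *ᵥ u) := by
  have hAu : 0 ≤ u ⬝ᵥ (A *ᵥ u) := by simpa using hA.dotProduct_mulVec_nonneg u
  have hAuAu : 0 ≤ (A *ᵥ u) ⬝ᵥ (A *ᵥ u) := by
    simpa using dotProduct_self_star_nonneg (A *ᵥ u)
  have hsymm : (A *ᵥ u) ⬝ᵥ u = u ⬝ᵥ (A *ᵥ u) := dotProduct_comm _ _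
  simp only [add_mulVec, smul_mulVec, one_mulVec, add_dotProduct, dotProduct_add,
    smul_dotProduct, dotProduct_smul, smul_eq_mul]
  nlinarith

theorem PosSemidef.isUnit_det_add_smul_one {A : Matrix n n ℝ} (hA : A.PosSemidef) {lam : ℝ}
    (hlam : 0 < lam) : IsUnit (A + lam • 1).det :=
  (PosDef.posSemidef_add hA (PosDef.one.smul hlam)).det_pos.ne'.isUnit

theorem PosSemidef.mul_norm_inv_add_smul_one_mulVec_le {A : Matrix n n ℝ} (hA : A.PosSemidef)
    {lam : ℝ} (hlam : 0 < lam) (q : n → ℝ) :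
    lam * ‖(A + lam • 1)⁻¹ *ᵥ q‖ ≤ √(q ⬝ᵥ q) := by
  set u := (A + lam • 1)⁻¹ *ᵥ q
  have hu : (A + lam • 1) *ᵥ u = q := by
    rw [mulVec_mulVec, mul_nonsing_inv _ (hA.isUnit_det_add_smul_one hlam), one_mulVec]
  calc lam * ‖u‖ ≤ lam * √(u ⬝ᵥ u) := by gcongr; exact norm_le_sqrt_dotProduct_self u
    _ = √(lam ^ 2 * (u ⬝ᵥ u)) := by rw [Real.sqrt_mul (sq_nonneg lam), Real.sqrt_sq hlam.le]
    _ ≤ √(q ⬝ᵥ q) := by gcongr; simpa only [hu] using hA.sq_mul_dotProduct_self_le hlam.le u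

theorem inv_add_smul_one_mulVec_mulVec_mulVec {R : Type*} [CommRing R] {A : Matrix n n R}
    {lam : R} (h : IsUnit (A + lam • 1).det) (q : n → R) :
    (A + lam • 1)⁻¹ *ᵥ (A *ᵥ (A *ᵥ q)) = A *ᵥ q - lam • q + lam ^ 2 • ((A + lam • 1)⁻¹ *ᵥ q) := by
  have key : A *ᵥ (A *ᵥ q) =
      (A + lam • 1) *ᵥ (A *ᵥ q - lam • q + lam ^ 2 • ((A + lam • 1)⁻¹ *ᵥ q)) := by
    rw [mulVec_add, mulVec_sub, mulVec_smul, mulVec_smul,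
      mulVec_mulVec q (A + lam • 1) (A + lam • 1)⁻¹, mul_nonsing_inv _ h, one_mulVec,
      add_mulVec, add_mulVec, smul_mulVec, smul_mulVec, one_mulVec, one_mulVec]
    module
  rw [key, mulVec_mulVec, nonsing_inv_mul _ h, one_mulVec]

theorem PosSemidef.tendsto_inv_add_smul_one_mulVec {A : Matrix n n ℝ} (hA : A.PosSemidef)
    (q : n → ℝ) :
    Tendsto (fun lam : ℝ => (A + lam • 1)⁻¹ *ᵥ (A *ᵥ (A *ᵥ q))) (𝓝[>] 0) (𝓝 (A *ᵥ q)) := by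
  have hdecomp : ∀ᶠ lam in 𝓝[>] (0 : ℝ), A *ᵥ q - lam • q + lam ^ 2 • ((A + lam • 1)⁻¹ *ᵥ q) =
      (A + lam • 1)⁻¹ *ᵥ (A *ᵥ (A *ᵥ q)) := by
    filter_upwards [self_mem_nhdsWithin] with lam hlam
    exact (inv_add_smul_one_mulVec_mulVec_mulVec (hA.isUnit_det_add_smul_one hlam) q).symm
  have hlin : Tendsto (fun lam : ℝ => A *ᵥ q - lam • q) (𝓝[>] 0) (𝓝 (A *ᵥ q)) := by
    have : Continuous fun lam : ℝ => A *ᵥ q - lam • q := by fun_prop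
    simpa using (this.tendsto 0).mono_left nhdsWithin_le_nhds
  have hrem : Tendsto (fun lam : ℝ => lam ^ 2 • ((A + lam • 1)⁻¹ *ᵥ q)) (𝓝[>] 0) (𝓝 0) := by
    refine squeeze_zero_norm' ?_ ((continuous_id.mul continuous_const).tendsto' 0 0 (zero_mul _)
      |>.mono_left nhdsWithin_le_nhds (f := fun lam : ℝ => lam * √(q ⬝ᵥ q)))
    filter_upwards [self_mem_nhdsWithin] with lam (hlam : 0 < lam)
    calc ‖lam ^ 2 • ((A + lam • 1)⁻¹ *ᵥ q)‖ = lam * (lam * ‖(A + lam • 1)⁻¹ *ᵥ q‖) := by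
          rw [norm_smul, Real.norm_of_nonneg (sq_nonneg lam)]; ring
      _ ≤ lam * √(q ⬝ᵥ q) := by gcongr; exact hA.mul_norm_inv_add_smul_one_mulVec_le hlam q
  simpa using (hlin.add hrem).congr' hdecomp

end Matrix

namespace IsMoorePenrose

variable {m n : ℕ} {A : Matrix (Fin m) (Fin n) ℝ} {G : Matrix (Fin n) (Fin m) ℝ}

theorem mulVec_mulVec_mulVec (hG : IsMoorePenrose A G) (c : Fin n → ℝ) :
    A *ᵥ (G *ᵥ (A *ᵥ c)) = A *ᵥ c := by
  rw [mulVec_mulVec, mulVec_mulVec, hG.1]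

theorem mulVec_mulVec_eq_transpose (hG : IsMoorePenrose A G) (c : Fin n → ℝ) :
    G *ᵥ (A *ᵥ c) = Aᵀ *ᵥ (Gᵀ *ᵥ c) := by
  rw [mulVec_mulVec, mulVec_mulVec, ← transpose_mul, hG.2.2.2]

end IsMoorePenrose

/-- The ridge estimator converges to the pseudo-OLS estimator as the penalty `λ → 0⁺`:
`(XᵀX + λI)⁻¹ Xᵀ Y → (XᵀX)⁺ Xᵀ Y`. -/
theorem ridge_tendsto_pseudoOLS {n p : ℕ} (X : Matrix (Fin n) (Fin p) ℝ) (Y : Fin n → ℝ)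
    (G : Matrix (Fin p) (Fin p) ℝ) (hG : IsMoorePenrose (Xᵀ * X) G) :
    Filter.Tendsto
      (fun lam : ℝ => (Xᵀ * X + lam • (1 : Matrix (Fin p) (Fin p) ℝ))⁻¹ *ᵥ (Xᵀ *ᵥ Y))
      (nhdsWithin 0 (Set.Ioi 0))
      (nhds (G *ᵥ (Xᵀ *ᵥ Y))) := by
  obtain ⟨c, hc⟩ : Xᵀ *ᵥ Y ∈ LinearMap.range (Xᵀ * X).mulVecLin := by
    rw [range_mulVecLin_transpose_mul_self]
    exact ⟨Y, rfl⟩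
  have hGc : G *ᵥ ((Xᵀ * X) *ᵥ c) = (Xᵀ * X) *ᵥ (Gᵀ *ᵥ c) := by
    rw [hG.mulVec_mulVec_eq_transpose, transpose_mul, transpose_transpose]
  have hAc : (Xᵀ * X) *ᵥ ((Xᵀ * X) *ᵥ (Gᵀ *ᵥ c)) = (Xᵀ * X) *ᵥ c := by
    rw [← hGc, hG.mulVec_mulVec_mulVec]
  have hA : (Xᵀ * X).PosSemidef := by simpa using posSemidef_conjTranspose_mul_self X
  rw [← hc, mulVecLin_apply, hGc, ← hAc]
  exact hA.tendsto_inv_add_smul_one_mulVec _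
end

section
/- Suppose y = fᵀρ + ε with E[ε | f, u] = 0, X = Λ f + u with E[u | f, ε] = 0, where f ∈ ℝᴷ has covariance Σ_f (positive definite), u ∈ ℝᵖ has covariance Σ_u (positive definite) and is uncorrelated with f, and E[ρᵀ f | X] is linear in X, i.e. equal to βᵀX for some β ∈ ℝᵖ. Then β = Σ_u⁻¹ Λ (Σ_f⁻¹ + Λᵀ Σ_u⁻¹ Λ)⁻¹ ρ. -/
open Matrix MeasureTheory

/-! Conditioning on `σ(X)` and pulling out `Xⱼ` turns `E[ρᵀf | X] = βᵀX` into the normal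
equations `E[XXᵀ] β = E[Xfᵀ] ρ`. In the factor model these moments are `ΛΣ_fΛᵀ + Σ_u` and
`ΛΣ_f`, and the push-through form `(ΛΣ_fΛᵀ + Σ_u) Σ_u⁻¹ Λ (Σ_f⁻¹ + ΛᵀΣ_u⁻¹Λ)⁻¹ = ΛΣ_f` of the
Woodbury identity solves them. -/

theorem integral_mul_condExp {Ω : Type*} {m m0 : MeasurableSpace Ω} {μ : Measure[m0] Ω}
    (hm : m ≤ m0) [SigmaFinite (μ.trim hm)] {Y g : Ω → ℝ} (hY : StronglyMeasurable[m] Y)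
    (hYg : Integrable (Y * g) μ) (hg : Integrable g μ) :
    ∫ ω, Y ω * μ[g | m] ω ∂μ = ∫ ω, Y ω * g ω ∂μ :=
  calc ∫ ω, Y ω * μ[g | m] ω ∂μ = ∫ ω, μ[Y * g | m] ω ∂μ :=
        integral_congr_ae (condExp_mul_of_stronglyMeasurable_left hY hYg hg).symm
    _ = ∫ ω, Y ω * g ω ∂μ := integral_condExp hm

section CrossMoment

variable {Ω ι ι' κ : Type*} [MeasurableSpace Ω] {μ : Measure Ω}

noncomputable def crossMoment (μ : Measure Ω) (Z : Ω → ι → ℝ) (W : Ω → κ → ℝ) : Matrix ι κ ℝ :=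
  Matrix.of fun i j => ∫ ω, Z ω i * W ω j ∂μ

theorem crossMoment_transpose (Z : Ω → ι → ℝ) (W : Ω → κ → ℝ) :
    (crossMoment μ Z W)ᵀ = crossMoment μ W Z := by
  ext i j
  simp only [crossMoment, transpose_apply, of_apply, mul_comm]

theorem memLp_dotProduct [Fintype ι] (v : ι → ℝ) {Z : Ω → ι → ℝ}
    (hZ : ∀ i, MemLp (fun ω => Z ω i) 2 μ) :
    MemLp (fun ω => v ⬝ᵥ Z ω) 2 μ :=
  memLp_finsetSum _ fun i _ => (hZ i).const_mul (v i)

theorem memLp_mulVec_apply [Fintype ι] (A : Matrix ι' ι ℝ) {Z : Ω → ι → ℝ}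
    (hZ : ∀ i, MemLp (fun ω => Z ω i) 2 μ) (l : ι') :
    MemLp (fun ω => (A *ᵥ Z ω) l) 2 μ :=
  memLp_dotProduct (A l) hZ

variable {Z Z' : Ω → ι → ℝ} {W : Ω → κ → ℝ}

theorem crossMoment_add_left (hZ : ∀ i, MemLp (fun ω => Z ω i) 2 μ)
    (hZ' : ∀ i, MemLp (fun ω => Z' ω i) 2 μ) (hW : ∀ j, MemLp (fun ω => W ω j) 2 μ) :
    crossMoment μ (fun ω => Z ω + Z' ω) W = crossMoment μ Z W + crossMoment μ Z' W := by
  ext i j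
  simp only [crossMoment, of_apply, Matrix.add_apply, Pi.add_apply, add_mul]
  exact integral_add ((hZ i).integrable_mul (hW j)) ((hZ' i).integrable_mul (hW j))

theorem integral_mul_dotProduct [Fintype κ] (hZ : ∀ i, MemLp (fun ω => Z ω i) 2 μ)
    (hW : ∀ j, MemLp (fun ω => W ω j) 2 μ) (v : κ → ℝ) (i : ι) :
    ∫ ω, Z ω i * (v ⬝ᵥ W ω) ∂μ = (crossMoment μ Z W *ᵥ v) i := by
  have hint : ∀ j, Integrable (fun ω => v j * (Z ω i * W ω j)) μ := fun j =>
    ((hZ i).integrable_mul (hW j)).const_mul (v j)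
  calc ∫ ω, Z ω i * (v ⬝ᵥ W ω) ∂μ = ∫ ω, ∑ j, v j * (Z ω i * W ω j) ∂μ := by
        simp only [dotProduct, Finset.mul_sum, mul_left_comm]
    _ = (crossMoment μ Z W *ᵥ v) i := by
        simp only [integral_finsetSum _ fun j _ => hint j, integral_const_mul, mulVec,
          dotProduct, crossMoment, of_apply, mul_comm]

theorem crossMoment_mulVec_left [Fintype ι] (A : Matrix ι' ι ℝ)
    (hZ : ∀ i, MemLp (fun ω => Z ω i) 2 μ) (hW : ∀ j, MemLp (fun ω => W ω j) 2 μ) :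
    crossMoment μ (fun ω => A *ᵥ Z ω) W = A * crossMoment μ Z W := by
  ext l j
  calc ∫ ω, (A *ᵥ Z ω) l * W ω j ∂μ = ∫ ω, W ω j * (A l ⬝ᵥ Z ω) ∂μ := by
        simp only [mulVec, mul_comm]
    _ = (A * crossMoment μ Z W) l j := by
        rw [integral_mul_dotProduct hW hZ, ← crossMoment_transpose, mulVec_transpose]
        rfl

theorem integral_mul_eq_crossMoment_mulVec_of_condExp_eq [Fintype ι] [IsFiniteMeasure μ]
    {X : Ω → ι → ℝ} (hX : Measurable X) (hXL2 : ∀ i, MemLp (fun ω => X ω i) 2 μ)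
    {g : Ω → ℝ} (hg : MemLp g 2 μ) {β : ι → ℝ}
    (hlin : μ[g | MeasurableSpace.comap X inferInstance] =ᵐ[μ] fun ω => β ⬝ᵥ X ω) (j : ι) :
    ∫ ω, X ω j * g ω ∂μ = (crossMoment μ X X *ᵥ β) j := by
  have hXj : StronglyMeasurable[MeasurableSpace.comap X inferInstance] fun ω => X ω j :=
    ((measurable_pi_apply j).comp (comap_measurable X)).stronglyMeasurable
  rw [← integral_mul_condExp hX.comap_le hXj ((hXL2 j).integrable_mul hg)
    (hg.integrable one_le_two), ← integral_mul_dotProduct hXL2 hXL2]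
  exact integral_congr_ae (hlin.mono fun ω hω => congrArg (X ω j * ·) hω)

section FactorModel

variable {f : Ω → κ → ℝ} {u : Ω → ι → ℝ}

theorem crossMoment_factorModel_factor [Fintype κ] (Λ : Matrix ι κ ℝ)
    (hf : ∀ k, MemLp (fun ω => f ω k) 2 μ) (hu : ∀ i, MemLp (fun ω => u ω i) 2 μ)
    (hfu : crossMoment μ f u = 0) :
    crossMoment μ (fun ω => Λ *ᵥ f ω + u ω) f = Λ * crossMoment μ f f := by
  rw [crossMoment_add_left (memLp_mulVec_apply Λ hf) hu hf,
    crossMoment_mulVec_left Λ hf hf, ← crossMoment_transpose f u, hfu, transpose_zero, add_zero]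

theorem crossMoment_factorModel_self [Fintype κ] (Λ : Matrix ι κ ℝ)
    (hf : ∀ k, MemLp (fun ω => f ω k) 2 μ) (hu : ∀ i, MemLp (fun ω => u ω i) 2 μ)
    (hfu : crossMoment μ f u = 0) :
    crossMoment μ (fun ω => Λ *ᵥ f ω + u ω) (fun ω => Λ *ᵥ f ω + u ω)
      = Λ * crossMoment μ f f * Λᵀ + crossMoment μ u u := by
  have hΛf := memLp_mulVec_apply Λ hf
  have hX : ∀ i, MemLp (fun ω => (Λ *ᵥ f ω + u ω) i) 2 μ := fun i => (hΛf i).add (hu i)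
  have hXu : crossMoment μ (fun ω => Λ *ᵥ f ω + u ω) u = crossMoment μ u u := by
    rw [crossMoment_add_left hΛf hu hu, crossMoment_mulVec_left Λ hf hu, hfu, Matrix.mul_zero,
      zero_add]
  rw [crossMoment_add_left hΛf hu hX, crossMoment_mulVec_left Λ hf hX,
    ← crossMoment_transpose _ f, crossMoment_factorModel_factor Λ hf hu hfu,
    ← crossMoment_transpose _ u, hXu, crossMoment_transpose, transpose_mul,
    crossMoment_transpose, Matrix.mul_assoc]

end FactorModel

end CrossMoment

namespace Matrix

variable {m n K : Type*} [Fintype m] [Fintype n] [DecidableEq m] [DecidableEq n]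

theorem woodbury_push_through [Field K] (U : Matrix m n K) (A : Matrix n n K) (V : Matrix n m K)
    (C : Matrix m m K) (hA : IsUnit A) (hC : IsUnit C) (hAC : IsUnit (A⁻¹ + V * C⁻¹ * U)) :
    (U * A * V + C) * (C⁻¹ * U * (A⁻¹ + V * C⁻¹ * U)⁻¹) = U * A := by
  have factor : (U * A * V + C) * (C⁻¹ * U) = U * A * (A⁻¹ + V * C⁻¹ * U) := by
    rw [Matrix.add_mul, Matrix.mul_add, ← Matrix.mul_assoc C,
      mul_nonsing_inv C ((isUnit_iff_isUnit_det C).1 hC), Matrix.one_mul,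
      mul_nonsing_inv_cancel_right A U ((isUnit_iff_isUnit_det A).1 hA)]
    simp only [Matrix.mul_assoc, add_comm]
  rw [← Matrix.mul_assoc, factor,
    mul_nonsing_inv_cancel_right _ _ ((isUnit_iff_isUnit_det _).1 hAC)]

theorem eq_woodbury_of_mulVec_eq (Λ : Matrix m n ℝ) {Sf : Matrix n n ℝ} {Su : Matrix m m ℝ}
    (hSf : Sf.PosDef) (hSu : Su.PosDef) {β : m → ℝ} {ρ : n → ℝ}
    (h : (Λ * Sf * Λᵀ + Su) *ᵥ β = Λ *ᵥ (Sf *ᵥ ρ)) :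
    β = Su⁻¹ *ᵥ (Λ *ᵥ ((Sf⁻¹ + Λᵀ * Su⁻¹ * Λ)⁻¹ *ᵥ ρ)) := by
  have hN : (Sf⁻¹ + Λᵀ * Su⁻¹ * Λ).PosDef := by
    simpa only [conjTranspose_eq_transpose_of_trivial] using
      hSf.inv.add_posSemidef (hSu.inv.posSemidef.conjTranspose_mul_mul_same Λ)
  have hM : (Λ * Sf * Λᵀ + Su).PosDef := by
    simpa only [conjTranspose_eq_transpose_of_trivial] using
      PosDef.posSemidef_add (hSf.posSemidef.mul_mul_conjTranspose_same Λ) hSu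
  apply mulVec_injective_iff_isUnit.2 hM.isUnit
  rw [h, mulVec_mulVec]
  conv_lhs => rw [← woodbury_push_through Λ Sf Λᵀ Su hSf.isUnit hSu.isUnit hN.isUnit]
  simp only [mulVec_mulVec, Matrix.mul_assoc]

end Matrix

theorem regression_coefficient_of_factor_model_general
    {Ω : Type*} [m0 : MeasurableSpace Ω] (μ : Measure Ω) [IsProbabilityMeasure μ]
    {K p : ℕ} (f : Ω → Fin K → ℝ) (u : Ω → Fin p → ℝ) (X : Ω → Fin p → ℝ)
    (Λ : Matrix (Fin p) (Fin K) ℝ) (Sf : Matrix (Fin K) (Fin K) ℝ)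
    (Su : Matrix (Fin p) (Fin p) ℝ) (ρ : Fin K → ℝ) (β : Fin p → ℝ)
    (hf : Measurable f) (hu : Measurable u)
    (hX : ∀ ω, X ω = Λ *ᵥ f ω + u ω)
    (hL2f : ∀ i, MemLp (fun ω => f ω i) 2 μ)
    (hL2u : ∀ i, MemLp (fun ω => u ω i) 2 μ)
    (hSf : ∀ i j, ∫ ω, f ω i * f ω j ∂μ = Sf i j)
    (hSu : ∀ i j, ∫ ω, u ω i * u ω j ∂μ = Su i j)
    (hfu : ∀ i j, ∫ ω, f ω i * u ω j ∂μ = 0)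
    (hSfpd : Sf.PosDef) (hSupd : Su.PosDef)
    (hlin : μ[(fun ω => ρ ⬝ᵥ f ω) | MeasurableSpace.comap X inferInstance]
        =ᵐ[μ] fun ω => β ⬝ᵥ X ω) :
    β = Su⁻¹ *ᵥ (Λ *ᵥ ((Sf⁻¹ + Λᵀ * Su⁻¹ * Λ)⁻¹ *ᵥ ρ)) := by
  obtain rfl : X = fun ω => Λ *ᵥ f ω + u ω := funext hX
  have hSf' : crossMoment μ f f = Sf := Matrix.ext hSf
  have hSu' : crossMoment μ u u = Su := Matrix.ext hSu
  have hfu' : crossMoment μ f u = 0 := Matrix.ext hfu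
  have hL2X : ∀ i, MemLp (fun ω => (Λ *ᵥ f ω + u ω) i) 2 μ := fun i =>
    (memLp_mulVec_apply Λ hL2f i).add (hL2u i)
  have hnormal : crossMoment μ (fun ω => Λ *ᵥ f ω + u ω) (fun ω => Λ *ᵥ f ω + u ω) *ᵥ β
      = crossMoment μ (fun ω => Λ *ᵥ f ω + u ω) f *ᵥ ρ := funext fun j => by
    rw [← integral_mul_eq_crossMoment_mulVec_of_condExp_eq (by fun_prop) hL2X
      (memLp_dotProduct ρ hL2f) hlin, integral_mul_dotProduct hL2X hL2f]
  rw [crossMoment_factorModel_self Λ hL2f hL2u hfu',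
    crossMoment_factorModel_factor Λ hL2f hL2u hfu', hSf', hSu', ← mulVec_mulVec] at hnormal
  exact eq_woodbury_of_mulVec_eq Λ hSfpd hSupd hnormal

/-- Theorem 1(i): if `y = ρᵀf + ε`, `X = Λf + u`, with `Cov(f) = Σ_f` and `Cov(u) = Σ_u`
positive definite, `f` and `u` uncorrelated, and the conditional expectation
`E[ρᵀf | X]` equals the linear function `βᵀX`, then
`β = Σ_u⁻¹ Λ (Σ_f⁻¹ + Λᵀ Σ_u⁻¹ Λ)⁻¹ ρ`. -/
theorem regression_coefficient_of_factor_model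
    {Ω : Type*} [m0 : MeasurableSpace Ω] (μ : Measure Ω) [IsProbabilityMeasure μ]
    {K p : ℕ} (f : Ω → Fin K → ℝ) (u : Ω → Fin p → ℝ) (X : Ω → Fin p → ℝ)
    (Λ : Matrix (Fin p) (Fin K) ℝ) (Sf : Matrix (Fin K) (Fin K) ℝ)
    (Su : Matrix (Fin p) (Fin p) ℝ) (ρ : Fin K → ℝ) (β : Fin p → ℝ)
    (hf : Measurable f) (hu : Measurable u)
    (hX : ∀ ω, X ω = Λ *ᵥ f ω + u ω)
    (hL2f : ∀ i, MemLp (fun ω => f ω i) 2 μ)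
    (hL2u : ∀ i, MemLp (fun ω => u ω i) 2 μ)
    (hmeanf : ∀ i, ∫ ω, f ω i ∂μ = 0)
    (hmeanu : ∀ i, ∫ ω, u ω i ∂μ = 0)
    (hSf : ∀ i j, ∫ ω, f ω i * f ω j ∂μ = Sf i j)
    (hSu : ∀ i j, ∫ ω, u ω i * u ω j ∂μ = Su i j)
    (hfu : ∀ i j, ∫ ω, f ω i * u ω j ∂μ = 0)
    (hSfpd : Sf.PosDef) (hSupd : Su.PosDef)
    (hlin : μ[(fun ω => ρ ⬝ᵥ f ω) | MeasurableSpace.comap X inferInstance]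
        =ᵐ[μ] fun ω => β ⬝ᵥ X ω) :
    β = Su⁻¹ *ᵥ (Λ *ᵥ ((Sf⁻¹ + Λᵀ * Su⁻¹ * Λ)⁻¹ *ᵥ ρ)) :=
  regression_coefficient_of_factor_model_general (m0 := m0) μ f u X Λ Sf Su ρ β hf hu hX hL2f hL2u
    hSf hSu hfu hSfpd hSupd hlin
end

section
/- Let Σ_f be K × K positive definite, Σ_u p × p positive definite with eigenvalues bounded between c > 0 and C, Λ a p × K matrix with σ_min(ΛᵀΛ) ≥ ψ > 0, and ρ ∈ ℝᴷ with ‖ρ‖ bounded. With β = Σ_u⁻¹ Λ (Σ_f⁻¹ + Λᵀ Σ_u⁻¹ Λ)⁻¹ ρ, the squared ℓ₂-norm of β satisfies ‖β‖² ≤ C' / ψ for a constant C' depending only on c, C, ‖Σ_f⁻¹‖, and ‖ρ‖. -/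
open Matrix

/-! With `A = Σ_f⁻¹ + Λᵀ Σ_u⁻¹ Λ`, `w = A⁻¹ ρ` and `u = Λ w` we have `β = Σ_u⁻¹ u` and
`⟪w, ρ⟫ = ⟪w, A w⟫ = ⟪w, Σ_f⁻¹ w⟫ + ⟪u, Σ_u⁻¹ u⟫`. As `Σ_u⁻¹ ⪰ C⁻¹` and `ΛᵀΛ ⪰ ψ`, this is at least
`(ψ / C) ‖w‖²`, which forces `⟪w, ρ⟫ ≤ C ‖ρ‖² / ψ`. Finally
`c ‖β‖² ≤ ⟪β, Σ_u β⟫ = ⟪u, Σ_u⁻¹ u⟫ ≤ ⟪w, ρ⟫`. -/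

namespace Matrix

section CommRing

variable {R : Type*} [CommRing R] {m n : Type*} [Fintype m] [Fintype n]

theorem dotProduct_transpose_mul_mul_mulVec (S : Matrix m m R) (Λ : Matrix m n R) (x : n → R) :
    x ⬝ᵥ (Λᵀ * S * Λ) *ᵥ x = (Λ *ᵥ x) ⬝ᵥ S *ᵥ (Λ *ᵥ x) := by
  rw [← mulVec_mulVec, ← mulVec_mulVec, dotProduct_mulVec, vecMul_transpose]

theorem dotProduct_transpose_mul_mulVec (Λ : Matrix m n R) (x : n → R) :
    x ⬝ᵥ (Λᵀ * Λ) *ᵥ x = (Λ *ᵥ x) ⬝ᵥ (Λ *ᵥ x) := by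
  rw [← mulVec_mulVec, dotProduct_mulVec, vecMul_transpose]

theorem mulVec_nonsing_inv_mulVec [DecidableEq n] {S : Matrix n n R} (hS : IsUnit S.det)
    (x : n → R) : S *ᵥ (S⁻¹ *ᵥ x) = x := by
  rw [mulVec_mulVec, mul_nonsing_inv S hS, one_mulVec]

theorem mul_nonsing_inv_mulVec_dotProduct_self_le [LE R] [DecidableEq n] {S : Matrix n n R}
    (hdet : IsUnit S.det) {c : R} (hge : ∀ x, c * (x ⬝ᵥ x) ≤ x ⬝ᵥ S *ᵥ x) (x : n → R) :
    c * ((S⁻¹ *ᵥ x) ⬝ᵥ (S⁻¹ *ᵥ x)) ≤ x ⬝ᵥ S⁻¹ *ᵥ x := by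
  have h := hge (S⁻¹ *ᵥ x)
  rwa [mulVec_nonsing_inv_mulVec hdet, dotProduct_comm (S⁻¹ *ᵥ x) x] at h

end CommRing

section QuadraticForm

variable {R : Type*} [CommRing R] [LinearOrder R] [IsStrictOrderedRing R] {n : Type*} [Fintype n]

theorem dotProduct_self_nonneg (v : n → R) : 0 ≤ v ⬝ᵥ v :=
  Finset.sum_nonneg fun i _ => mul_self_nonneg (v i)

/-- Expand `0 ≤ ‖a • w - b • ρ‖²` and use `a² ‖w‖² ≤ a b ⟪w, ρ⟫`. -/
theorem mul_dotProduct_le_of_mul_dotProduct_self_le {a b : R} (ha : 0 ≤ a) (hb : 0 < b)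
    {w ρ : n → R} (h : a * (w ⬝ᵥ w) ≤ b * (w ⬝ᵥ ρ)) : a * (w ⬝ᵥ ρ) ≤ b * (ρ ⬝ᵥ ρ) := by
  have hsq := dotProduct_self_nonneg (a • w - b • ρ)
  simp only [sub_dotProduct, dotProduct_sub, smul_dotProduct, dotProduct_smul, smul_eq_mul,
    dotProduct_comm ρ w] at hsq
  refine le_of_mul_le_mul_left ?_ hb
  nlinarith [mul_le_mul_of_nonneg_left h ha]

/-- Expand `0 ≤ ⟪k • x - S x, S (k • x - S x)⟫` and bound its last term `⟪S x, S (S x)⟫` by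
`k ‖S x‖²`. -/
theorem mulVec_dotProduct_mulVec_le {S : Matrix n n R} (hS : S.IsSymm)
    (hpos : ∀ x, 0 ≤ x ⬝ᵥ S *ᵥ x) {k : R} (hk : 0 < k) (hle : ∀ x, x ⬝ᵥ S *ᵥ x ≤ k * (x ⬝ᵥ x))
    (x : n → R) : (S *ᵥ x) ⬝ᵥ (S *ᵥ x) ≤ k * (x ⬝ᵥ S *ᵥ x) := by
  have hsymm : x ⬝ᵥ S *ᵥ (S *ᵥ x) = (S *ᵥ x) ⬝ᵥ (S *ᵥ x) := by
    rw [dotProduct_mulVec, ← mulVec_transpose, hS.eq, dotProduct_comm]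
  have hsq := hpos (k • x - S *ᵥ x)
  simp only [mulVec_sub, mulVec_smul, sub_dotProduct, dotProduct_sub, smul_dotProduct,
    dotProduct_smul, smul_eq_mul, hsymm] at hsq
  refine le_of_mul_le_mul_left ?_ hk
  nlinarith [hle (S *ᵥ x), dotProduct_comm (S *ᵥ x) x]

variable [DecidableEq n]

theorem dotProduct_self_le_mul_dotProduct_nonsing_inv_mulVec {S : Matrix n n R} (hS : S.IsSymm)
    (hdet : IsUnit S.det) (hpos : ∀ x, 0 ≤ x ⬝ᵥ S *ᵥ x) {k : R} (hk : 0 < k)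
    (hle : ∀ x, x ⬝ᵥ S *ᵥ x ≤ k * (x ⬝ᵥ x)) (x : n → R) :
    x ⬝ᵥ x ≤ k * (x ⬝ᵥ S⁻¹ *ᵥ x) := by
  have h := mulVec_dotProduct_mulVec_le hS hpos hk hle (S⁻¹ *ᵥ x)
  rwa [mulVec_nonsing_inv_mulVec hdet, dotProduct_comm (S⁻¹ *ᵥ x)] at h

end QuadraticForm

theorem IsSymm.posDef_of_mul_dotProduct_self_le {n : Type*} [Fintype n] {S : Matrix n n ℝ}
    (hS : S.IsSymm) {c : ℝ} (hc : 0 < c) (hge : ∀ x, c * (x ⬝ᵥ x) ≤ x ⬝ᵥ S *ᵥ x) : S.PosDef := by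
  refine .of_dotProduct_mulVec_pos (by rwa [IsHermitian, conjTranspose_eq_transpose_of_trivial])
    fun x hx => ?_
  have hxx : 0 < x ⬝ᵥ x := (dotProduct_self_nonneg x).lt_of_ne' (dotProduct_self_eq_zero.not.mpr hx)
  simpa only [star_trivial] using (mul_pos hc hxx).trans_le (hge x)

end Matrix

/-- Dense-signal bound: with eigenvalues of `Σ_u` between `c` and `C`, `‖Σ_f⁻¹‖ ≤ C`,
`σ_min(ΛᵀΛ) ≥ ψ`, and `‖ρ‖² ≤ C`, the coefficient
`β = Σ_u⁻¹ Λ (Σ_f⁻¹ + Λᵀ Σ_u⁻¹ Λ)⁻¹ ρ` satisfies `‖β‖² ≤ C'/ψ` for a constant `C'`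
depending only on `c`, `C`. -/
theorem beta_sq_norm_bound (K : ℕ) (c C : ℝ) (hc : 0 < c) (hC : 0 < C) :
    ∃ C' : ℝ, 0 < C' ∧
      ∀ (p : ℕ) (Λ : Matrix (Fin p) (Fin K) ℝ) (Su : Matrix (Fin p) (Fin p) ℝ)
        (Sf : Matrix (Fin K) (Fin K) ℝ) (ρ : Fin K → ℝ) (ψ : ℝ),
        0 < ψ →
        Su.IsSymm →
        (∀ x : Fin p → ℝ, c * (x ⬝ᵥ x) ≤ x ⬝ᵥ (Su *ᵥ x)) →
        (∀ x : Fin p → ℝ, x ⬝ᵥ (Su *ᵥ x) ≤ C * (x ⬝ᵥ x)) →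
        Sf.PosDef →
        (∀ x : Fin K → ℝ, x ⬝ᵥ (Sf⁻¹ *ᵥ x) ≤ C * (x ⬝ᵥ x)) →
        (∀ x : Fin K → ℝ, ψ * (x ⬝ᵥ x) ≤ x ⬝ᵥ ((Λᵀ * Λ) *ᵥ x)) →
        ρ ⬝ᵥ ρ ≤ C →
        (Su⁻¹ *ᵥ (Λ *ᵥ ((Sf⁻¹ + Λᵀ * Su⁻¹ * Λ)⁻¹ *ᵥ ρ))) ⬝ᵥ
            (Su⁻¹ *ᵥ (Λ *ᵥ ((Sf⁻¹ + Λᵀ * Su⁻¹ * Λ)⁻¹ *ᵥ ρ))) ≤ C' / ψ := by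
  refine ⟨C ^ 2 / c, by positivity, ?_⟩
  intro p Λ Su Sf ρ ψ hψ hSu hlow hup hSf _ hΛ hρ
  have hSuPD := hSu.posDef_of_mul_dotProduct_self_le hc hlow
  have hSu_det := Su.isUnit_iff_isUnit_det.mp hSuPD.isUnit
  have hA : (Sf⁻¹ + Λᵀ * Su⁻¹ * Λ).PosDef := hSf.inv.add_posSemidef <| by
    simpa only [conjTranspose_eq_transpose_of_trivial] using
      hSuPD.inv.posSemidef.conjTranspose_mul_mul_same Λ
  set w := (Sf⁻¹ + Λᵀ * Su⁻¹ * Λ)⁻¹ *ᵥ ρ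
  set u := Λ *ᵥ w
  have hquad : w ⬝ᵥ Sf⁻¹ *ᵥ w + u ⬝ᵥ Su⁻¹ *ᵥ u = w ⬝ᵥ ρ := by
    rw [← dotProduct_transpose_mul_mul_mulVec Su⁻¹ Λ w, ← dotProduct_add, ← add_mulVec,
      mulVec_nonsing_inv_mulVec (isUnit_iff_isUnit_det _ |>.mp hA.isUnit)]
  have hψw : ψ * (w ⬝ᵥ w) ≤ u ⬝ᵥ u := (hΛ w).trans_eq (dotProduct_transpose_mul_mulVec Λ w)
  clear_value u w
  have hSf_form : 0 ≤ w ⬝ᵥ Sf⁻¹ *ᵥ w := by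
    simpa only [star_trivial] using hSf.inv.posSemidef.dotProduct_mulVec_nonneg w
  have hu : u ⬝ᵥ u ≤ C * (u ⬝ᵥ Su⁻¹ *ᵥ u) :=
    dotProduct_self_le_mul_dotProduct_nonsing_inv_mulVec hSu hSu_det
      (fun x => (mul_nonneg hc.le (dotProduct_self_nonneg x)).trans (hlow x)) hC hup u
  have hwρ : ψ * (w ⬝ᵥ ρ) ≤ C * (ρ ⬝ᵥ ρ) :=
    mul_dotProduct_le_of_mul_dotProduct_self_le hψ.le hC <|
      hψw.trans <| hu.trans <| by gcongr; linarith
  have hβ := mul_nonsing_inv_mulVec_dotProduct_self_le hSu_det hlow u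
  rw [div_div, le_div_iff₀ (by positivity)]
  calc _ = ψ * (c * ((Su⁻¹ *ᵥ u) ⬝ᵥ (Su⁻¹ *ᵥ u))) := by ring
    _ ≤ ψ * (w ⬝ᵥ ρ) := by gcongr; linarith
    _ ≤ C * C := hwρ.trans (by gcongr)
    _ = C ^ 2 := (sq C).symm
end

section
/- Let X, U be n × p real matrices, F an n × K matrix with FᵀF invertible, and Λ a p × K matrix such that X = FΛᵀ + U (equivalently Λ = (X − U)ᵀ F (FᵀF)⁻¹). Then the operator norm of Λᵀ (XᵀX)⁺ Λ satisfies ‖Λᵀ(XᵀX)⁺Λ‖ ≤ 2 ‖(FᵀF)⁻¹‖ · ‖FᵀF‖ · ‖(FᵀF)⁻¹‖ · (1 + σ_max(U (XᵀX)⁺ Uᵀ)), using that σ_max(X (XᵀX)⁺ Xᵀ) ≤ 1. -/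
/-!
Write `G = (XᵀX)⁺`. By uniqueness of the pseudoinverse `G` is symmetric, so `G (XᵀX) G = G` gives
`Y G Yᵀ = (X G Yᵀ)ᵀ (X G Yᵀ)` for every `Y`, and the C⋆-identity of the spectral norm gives
`‖Y G Yᵀ‖ = ‖X G Yᵀ‖²`. Taking `Y = X` shows `‖X G Xᵀ‖ ≤ 1`, taking `Y = U` gives
`‖U G Uᵀ‖ = b²` with `b = ‖X G Uᵀ‖`, and taking `Y = Λᵀ = (FᵀF)⁻¹ Fᵀ (X - U)` bounds the left side
by `(1 + b)² ‖F‖² ‖(FᵀF)⁻¹‖²`. Conclude with `‖F‖² = ‖FᵀF‖` and `(1 + b)² ≤ 2 (1 + b²)`.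
-/

open Matrix

open scoped Matrix.Norms.L2Operator

namespace IsMoorePenrose

section

variable {m n : ℕ} {A : Matrix (Fin m) (Fin n) ℝ} {B C : Matrix (Fin n) (Fin m) ℝ}

theorem transpose (h : IsMoorePenrose A B) : IsMoorePenrose Aᵀ Bᵀ := by
  obtain ⟨h₁, h₂, h₃, h₄⟩ := h
  refine ⟨?_, ?_, ?_, ?_⟩
  · rw [← transpose_mul, ← transpose_mul, ← Matrix.mul_assoc, h₁]
  · rw [← transpose_mul, ← transpose_mul, ← Matrix.mul_assoc, h₂]
  · rw [← transpose_mul, h₄]; exact h₄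
  · rw [← transpose_mul, h₃]; exact h₃

theorem unique (hB : IsMoorePenrose A B) (hC : IsMoorePenrose A C) : B = C := by
  obtain ⟨hB₁, hB₂, hB₃, hB₄⟩ := hB
  obtain ⟨hC₁, hC₂, hC₃, hC₄⟩ := hC
  have hAB : A * B = A * C :=
    calc A * B = (A * C * (A * B))ᵀ := by rw [← Matrix.mul_assoc, hC₁, hB₃]
      _ = A * B * (A * C) := by rw [transpose_mul, hB₃, hC₃]
      _ = A * C := by rw [← Matrix.mul_assoc, hB₁]
  have hBA : B * A = C * A :=
    calc B * A = (B * A * (C * A))ᵀ := by rw [Matrix.mul_assoc, ← Matrix.mul_assoc A, hC₁, hB₄]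
      _ = C * A * (B * A) := by rw [transpose_mul, hB₄, hC₄]
      _ = C * A := by rw [Matrix.mul_assoc, ← Matrix.mul_assoc A, hB₁]
  calc B = B * A * B := hB₂.symm
    _ = C * A * C := by rw [hBA, Matrix.mul_assoc, hAB, ← Matrix.mul_assoc]
    _ = C := hC₂

end

theorem transpose_eq_self {m : ℕ} {A B : Matrix (Fin m) (Fin m) ℝ} (hA : Aᵀ = A)
    (h : IsMoorePenrose A B) : Bᵀ = B :=
  (hA ▸ h.transpose).unique h

section Gram

variable {n p : ℕ} {X : Matrix (Fin n) (Fin p) ℝ} {G : Matrix (Fin p) (Fin p) ℝ}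

theorem mul_mul_transpose_eq (hG : IsMoorePenrose (Xᵀ * X) G) {k : ℕ}
    (Y : Matrix (Fin k) (Fin p) ℝ) : Y * G * Yᵀ = (X * G * Yᵀ)ᵀ * (X * G * Yᵀ) := by
  have hGT : Gᵀ = G := hG.transpose_eq_self (by rw [transpose_mul, transpose_transpose])
  obtain ⟨-, hGAG, -, -⟩ := hG
  conv_lhs => rw [← hGAG]
  simp only [transpose_mul, transpose_transpose, hGT, Matrix.mul_assoc]

theorem norm_mul_mul_transpose (hG : IsMoorePenrose (Xᵀ * X) G) {k : ℕ}
    (Y : Matrix (Fin k) (Fin p) ℝ) : ‖Y * G * Yᵀ‖ = ‖X * G * Yᵀ‖ ^ 2 := by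
  rw [hG.mul_mul_transpose_eq Y, ← conjTranspose_eq_transpose_of_trivial,
    l2_opNorm_conjTranspose_mul_self, sq]

theorem norm_mul_mul_transpose_self_le_one (hG : IsMoorePenrose (Xᵀ * X) G) :
    ‖X * G * Xᵀ‖ ≤ 1 := by
  have h := hG.norm_mul_mul_transpose X
  nlinarith [norm_nonneg (X * G * Xᵀ)]

end Gram

end IsMoorePenrose

/-- Deterministic core of the variance bound of Theorem 2:
if `X = FΛᵀ + U` with `FᵀF` invertible, then
`‖Λᵀ(XᵀX)⁺Λ‖ ≤ 2 ‖(FᵀF)⁻¹‖ ‖FᵀF‖ ‖(FᵀF)⁻¹‖ (1 + σ_max(U(XᵀX)⁺Uᵀ))`,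
using that `σ_max(X(XᵀX)⁺Xᵀ) ≤ 1`. -/
theorem lambda_gram_pinv_lambda_bound {n p K : ℕ}
    (X U : Matrix (Fin n) (Fin p) ℝ) (F : Matrix (Fin n) (Fin K) ℝ)
    (Λ : Matrix (Fin p) (Fin K) ℝ)
    (hFF : IsUnit (Fᵀ * F).det)
    (hX : X = F * Λᵀ + U)
    (G : Matrix (Fin p) (Fin p) ℝ) (hG : IsMoorePenrose (Xᵀ * X) G) :
    ‖Matrix.toEuclideanCLM (𝕜 := ℝ) (Λᵀ * G * Λ)‖ ≤
      2 * ‖Matrix.toEuclideanCLM (𝕜 := ℝ) (Fᵀ * F)⁻¹‖ *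
        ‖Matrix.toEuclideanCLM (𝕜 := ℝ) (Fᵀ * F)‖ *
        ‖Matrix.toEuclideanCLM (𝕜 := ℝ) (Fᵀ * F)⁻¹‖ *
        (1 + ‖Matrix.toEuclideanCLM (𝕜 := ℝ) (U * G * Uᵀ)‖) := by
  simp only [l2_opNorm_toEuclideanCLM]
  set H := (Fᵀ * F)⁻¹
  set b := ‖X * G * Uᵀ‖
  have hΛ : Λ = (X - U)ᵀ * F * H := by
    rw [hX, add_sub_cancel_right, transpose_mul, transpose_transpose, Matrix.mul_assoc Λ,
      Matrix.mul_assoc Λ, mul_nonsing_inv _ hFF, Matrix.mul_one]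
  have hD : ‖X * G * (X - U)ᵀ‖ ≤ 1 + b := by
    rw [transpose_sub, Matrix.mul_sub]
    linarith [norm_sub_le (X * G * Xᵀ) (X * G * Uᵀ), hG.norm_mul_mul_transpose_self_le_one]
  have hXGΛ : ‖X * G * Λ‖ ≤ (1 + b) * ‖F‖ * ‖H‖ :=
    calc ‖X * G * Λ‖ = ‖X * G * (X - U)ᵀ * F * H‖ := by simp only [hΛ, Matrix.mul_assoc]
      _ ≤ ‖X * G * (X - U)ᵀ‖ * ‖F‖ * ‖H‖ :=
        (l2_opNorm_mul _ _).trans (by gcongr; exact l2_opNorm_mul _ _)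
      _ ≤ (1 + b) * ‖F‖ * ‖H‖ := by gcongr
  have hF : ‖Fᵀ * F‖ = ‖F‖ ^ 2 := by
    rw [← conjTranspose_eq_transpose_of_trivial, l2_opNorm_conjTranspose_mul_self, sq]
  have hΛGΛ := hG.norm_mul_mul_transpose Λᵀ
  rw [transpose_transpose] at hΛGΛ
  rw [hΛGΛ, hF, hG.norm_mul_mul_transpose U]
  calc ‖X * G * Λ‖ ^ 2 ≤ ((1 + b) * ‖F‖ * ‖H‖) ^ 2 := by gcongr
    _ ≤ 2 * ‖H‖ * ‖F‖ ^ 2 * ‖H‖ * (1 + b ^ 2) := by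
      have hb : (1 + b) ^ 2 ≤ 2 * (1 + b ^ 2) := by nlinarith [sq_nonneg (1 - b)]
      nlinarith [mul_nonneg (sq_nonneg ‖F‖) (sq_nonneg ‖H‖)]
end

section
/- Let Σ_u be p₀ × p₀ positive definite with largest eigenvalue at most σ_u², Λ_I a p₀ × K matrix, and ρ ∈ ℝᴷ. If σ_K(Λ_IᵀΛ_I) ≥ σ_u² (i.e. the smallest nonzero eigenvalue of Λ_IᵀΛ_I is at least σ_u²), then ρᵀ Λ_Iᵀ (Λ_I Λ_Iᵀ + σ_u² I_{p₀})⁻¹ Λ_I ρ ≥ ‖ρ‖²/2. -/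
/-!
By the push-through identity `Λᵀ (Λ Λᵀ + s)⁻¹ Λ = A (A + s)⁻¹` with `A = ΛᵀΛ`. Writing `ρ = (A + s) y`,
the claim `2 ρᵀ A y ≥ ρᵀ ρ` expands to `‖A y‖² ≥ s² ‖y‖²`, which follows from `yᵀ A y ≥ s ‖y‖²`
by Cauchy–Schwarz.
-/

open Matrix

namespace Matrix

variable {m n R : Type*} [Fintype m] [Fintype n]

theorem sq_mul_dotProduct_self_le_of_mul_dotProduct_self_le (A : Matrix n n ℝ) {s : ℝ}
    (hs : 0 ≤ s) (y : n → ℝ) (h : s * (y ⬝ᵥ y) ≤ y ⬝ᵥ (A *ᵥ y)) :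
    s ^ 2 * (y ⬝ᵥ y) ≤ (A *ᵥ y) ⬝ᵥ (A *ᵥ y) := by
  have hy : 0 ≤ y ⬝ᵥ y := dotProduct_self_star_nonneg y
  have cauchy_schwarz : (y ⬝ᵥ (A *ᵥ y)) ^ 2 ≤ (y ⬝ᵥ y) * ((A *ᵥ y) ⬝ᵥ (A *ᵥ y)) := by
    simpa only [dotProduct, sq] using Finset.sum_mul_sq_le_sq_mul_sq Finset.univ y (A *ᵥ y)
  rcases hy.eq_or_lt with hy0 | hy0
  · rw [← hy0, mul_zero]
    exact dotProduct_self_star_nonneg _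
  · refine le_of_mul_le_mul_left ?_ hy0
    have hsy := mul_nonneg hs hy
    nlinarith [mul_le_mul h h hsy (hsy.trans h)]

variable [DecidableEq m] [DecidableEq n]

theorem inv_mul_eq_mul_inv_of_mul_eq [CommRing R] {A : Matrix m m R} {B : Matrix n n R}
    {X : Matrix m n R} (hA : IsUnit A) (hB : IsUnit B) (h : A * X = X * B) :
    A⁻¹ * X = X * B⁻¹ := by
  rw [isUnit_iff_isUnit_det] at hA hB
  calc A⁻¹ * X = A⁻¹ * (X * B) * B⁻¹ := by
        rw [Matrix.mul_assoc, Matrix.mul_assoc, mul_nonsing_inv _ hB, Matrix.mul_one]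
    _ = X * B⁻¹ := by rw [← h, ← Matrix.mul_assoc, nonsing_inv_mul _ hA, Matrix.one_mul]

theorem inv_mul_add_smul_one_mul [CommRing R] (X : Matrix m n R) (Y : Matrix n m R) (c : R)
    (hXY : IsUnit (X * Y + c • 1)) (hYX : IsUnit (Y * X + c • 1)) :
    (X * Y + c • 1)⁻¹ * X = X * (Y * X + c • 1)⁻¹ :=
  inv_mul_eq_mul_inv_of_mul_eq hXY hYX <| by
    simp only [Matrix.add_mul, Matrix.mul_add, Matrix.mul_assoc, Matrix.smul_mul,
      Matrix.mul_smul, Matrix.one_mul, Matrix.mul_one]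

theorem PosSemidef.isUnit_add_smul_one {P : Matrix n n ℝ} (hP : P.PosSemidef) {c : ℝ}
    (hc : 0 < c) : IsUnit (P + c • 1) :=
  (PosDef.posSemidef_add hP (PosDef.one.smul hc)).isUnit

theorem dotProduct_self_div_two_le_dotProduct_mul_inv_add_smul_one_mulVec (A : Matrix n n ℝ)
    {s : ℝ} (hs : 0 < s) (hB : IsUnit (A + s • 1)) (h : ∀ x, s * (x ⬝ᵥ x) ≤ x ⬝ᵥ (A *ᵥ x))
    (ρ : n → ℝ) : (ρ ⬝ᵥ ρ) / 2 ≤ ρ ⬝ᵥ ((A * (A + s • 1)⁻¹) *ᵥ ρ) := by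
  have hBdet := (isUnit_iff_isUnit_det _).mp hB
  obtain ⟨y, rfl⟩ : ∃ y, ρ = (A + s • 1) *ᵥ y :=
    ⟨(A + s • 1)⁻¹ *ᵥ ρ, by rw [mulVec_mulVec, mul_nonsing_inv _ hBdet, one_mulVec]⟩
  rw [← mulVec_mulVec, mulVec_mulVec _ (A + s • 1)⁻¹, nonsing_inv_mul _ hBdet, one_mulVec,
    add_mulVec, smul_mulVec, one_mulVec]
  have hAy := sq_mul_dotProduct_self_le_of_mul_dotProduct_self_le A hs.le y (h y)
  simp only [add_dotProduct, dotProduct_add, smul_dotProduct, dotProduct_smul, smul_eq_mul,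
    dotProduct_comm (A *ᵥ y) y]
  nlinarith [h y]

end Matrix

theorem ridge_bias_key_inequality_general {p₀ K : ℕ}
    (ΛI : Matrix (Fin p₀) (Fin K) ℝ) (ρ : Fin K → ℝ)
    (su2 : ℝ) (hsu : 0 < su2)
    (hmin : ∀ x : Fin K → ℝ, su2 * (x ⬝ᵥ x) ≤ x ⬝ᵥ ((ΛIᵀ * ΛI) *ᵥ x)) :
    ρ ⬝ᵥ (ΛIᵀ *ᵥ ((ΛI * ΛIᵀ + su2 • (1 : Matrix (Fin p₀) (Fin p₀) ℝ))⁻¹ *ᵥ (ΛI *ᵥ ρ)))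
      ≥ (ρ ⬝ᵥ ρ) / 2 := by
  have hM : IsUnit (ΛI * ΛIᵀ + su2 • 1) := by
    simpa only [conjTranspose_eq_transpose_of_trivial] using
      (posSemidef_self_mul_conjTranspose ΛI).isUnit_add_smul_one hsu
  have hB : IsUnit (ΛIᵀ * ΛI + su2 • 1) := by
    simpa only [conjTranspose_eq_transpose_of_trivial] using
      (posSemidef_conjTranspose_mul_self ΛI).isUnit_add_smul_one hsu
  rw [mulVec_mulVec, mulVec_mulVec, Matrix.mul_assoc, inv_mul_add_smul_one_mul ΛI ΛIᵀ su2 hM hB,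
    ← Matrix.mul_assoc]
  exact dotProduct_self_div_two_le_dotProduct_mul_inv_add_smul_one_mulVec _ hsu hB hmin ρ

/-- Ridge-bias key inequality (Theorem 3): if the smallest eigenvalue of `Λ_IᵀΛ_I`
is at least `σ_u²` (itself an upper bound on the eigenvalues of `Σ_u`), then
`ρᵀ Λ_Iᵀ (Λ_I Λ_Iᵀ + σ_u² I)⁻¹ Λ_I ρ ≥ ‖ρ‖²/2`. -/
theorem ridge_bias_key_inequality {p₀ K : ℕ}
    (ΛI : Matrix (Fin p₀) (Fin K) ℝ) (ρ : Fin K → ℝ)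
    (Su : Matrix (Fin p₀) (Fin p₀) ℝ) (su2 : ℝ) (hsu : 0 < su2)
    (hSu : Su.PosDef)
    (hSu_le : ∀ x : Fin p₀ → ℝ, x ⬝ᵥ (Su *ᵥ x) ≤ su2 * (x ⬝ᵥ x))
    (hmin : ∀ x : Fin K → ℝ, su2 * (x ⬝ᵥ x) ≤ x ⬝ᵥ ((ΛIᵀ * ΛI) *ᵥ x)) :
    ρ ⬝ᵥ (ΛIᵀ *ᵥ ((ΛI * ΛIᵀ + su2 • (1 : Matrix (Fin p₀) (Fin p₀) ℝ))⁻¹ *ᵥ (ΛI *ᵥ ρ)))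
      ≥ (ρ ⬝ᵥ ρ) / 2 :=
  ridge_bias_key_inequality_general ΛI ρ su2 hsu hmin
end
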